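/- arXiv:1206.0321 — 3 statements merged into one kernel-verified Lean document; each statement's English description precedes it below -/
import Mathlib

section
/- If z(x,y) is a smooth positive solution of the constant astigmatism equation, then the function z̃(x,y) = 1/z(y,x) is also a solution of the constant astigmatism equation. -/
/-- A function `z : ℝ → ℝ → ℝ` satisfies the constant astigmatism equation
`z_yy + (1/z)_xx + 2 = 0`. -/
def SatisfiesCAE (z : ℝ → ℝ → ℝ) : Prop :=
  ∀ x y : ℝ,
    deriv (fun t : ℝ => deriv (fun s : ℝ => z x s) t) y
      + deriv (fun t : ℝ => deriv (fun s : ℝ => 1 / z s y) t) x + 2 = 0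

/-- If `z` is a smooth positive solution of the constant astigmatism equation, then the
involution image `z̃(x,y) = 1 / z(y,x)` is also a solution. -/
theorem stmt_3 (z : ℝ → ℝ → ℝ)
    (hsmooth : ContDiff ℝ (⊤ : ℕ∞) (Function.uncurry z))
    (hpos : ∀ x y : ℝ, 0 < z x y)
    (hz : SatisfiesCAE z) :
    SatisfiesCAE (fun x y => 1 / z y x) := by
  intro x y
  have h := hz y x
  have key : (fun s : ℝ => 1 / (1 / z y s)) = fun s : ℝ => z y s := by
    funext s; rw [one_div_one_div]
  simp only [key]
  linarith [h]
end

section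
/- The one-soliton function ω(ξ,η) = 2 arctan(exp(λξ + η/λ)) satisfies the sine-Gordon equation ω_{ξη} = (1/2) sin(2ω) for any nonzero real constant λ. -/
/-!
The kink profile `f p = 2 arctan (exp p)` satisfies `f' = sin f`, because
`sin (2 arctan x) = 2x / (1 + x²)`. Hence `f'' = cos f · sin f = ½ sin 2f`, and for
`ω = f (λξ + η/λ)` the chain-rule factors `λ` and `1/λ` of `ω_{ξη}` cancel.
-/

open Real

theorem sin_two_mul_arctan (x : ℝ) : sin (2 * arctan x) = 2 * x / (1 + x ^ 2) := by
  rw [sin_two_mul, sin_arctan, cos_arctan, mul_assoc, div_mul_div_comm, mul_one,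
    mul_self_sqrt (by positivity), mul_div_assoc]

theorem hasDerivAt_two_mul_arctan_exp (p : ℝ) :
    HasDerivAt (fun p => 2 * arctan (exp p)) (sin (2 * arctan (exp p))) p :=
  ((hasDerivAt_exp p).arctan.const_mul 2).congr_deriv <| by
    rw [sin_two_mul_arctan]
    ring

theorem deriv_two_mul_arctan_exp_comp_affine (lam b ξ : ℝ) :
    deriv (fun a => 2 * arctan (exp (lam * a + b))) ξ
      = lam * sin (2 * arctan (exp (lam * ξ + b))) := by
  have hp : HasDerivAt (fun a => lam * a + b) lam ξ := by
    simpa using ((hasDerivAt_id ξ).const_mul lam).add_const b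
  exact ((hasDerivAt_two_mul_arctan_exp _).comp ξ hp).deriv.trans (mul_comm _ _)

/-- The one-soliton function `ω(ξ,η) = 2 arctan(exp(λξ + η/λ))` satisfies the sine-Gordon
equation `ω_{ξη} = (1/2) sin 2ω` for every nonzero `λ`. -/
theorem stmt_13 (lam : ℝ) (hlam : lam ≠ 0) (ξ η : ℝ) :
    deriv (fun b : ℝ =>
        deriv (fun a : ℝ => 2 * arctan (exp (lam * a + b / lam))) ξ) η
      = (1 / 2) * sin (2 * (2 * arctan (exp (lam * ξ + η / lam)))) := by
  simp only [deriv_two_mul_arctan_exp_comp_affine]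
  have hp : HasDerivAt (fun b => lam * ξ + b / lam) (1 / lam) η := by
    simpa using ((hasDerivAt_id η).div_const lam).const_add (lam * ξ)
  have hω : HasDerivAt (fun b => 2 * arctan (exp (lam * ξ + b / lam)))
      (sin (2 * arctan (exp (lam * ξ + η / lam))) * (1 / lam)) η :=
    (hasDerivAt_two_mul_arctan_exp _).comp η hp
  rw [(hω.sin.const_mul lam).deriv, sin_two_mul (2 * arctan _)]
  field_simp
end

section
/- Suppose ω, ω^{(1)} satisfy the λ = 1 Bäcklund system and f is a smooth function satisfying f_ξ = cos(ω^{(1)} + ω), f_η = cos(ω^{(1)} - ω). Then this first-order system for f is compatible: the mixed partials agree, i.e., ∂_η[cos(ω^{(1)} + ω)] = ∂_ξ[cos(ω^{(1)} - ω)], given that ω solves ω_{ξη} = (1/2) sin 2ω. -/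
open Real

private lemma hasDerivAt_snd (F : ℝ → ℝ → ℝ) (hF : ContDiff ℝ (⊤ : ℕ∞) (Function.uncurry F))
    (ξ η : ℝ) : HasDerivAt (fun b => F ξ b) (deriv (fun b => F ξ b) η) η := by
  have hd : Differentiable ℝ (fun b => F ξ b) := by
    have : (fun b => F ξ b) = Function.uncurry F ∘ (fun b => (ξ, b)) := rfl
    rw [this]
    exact (hF.differentiable (by simp)).comp ((differentiable_const _).prodMk differentiable_id)
  exact (hd η).hasDerivAt

private lemma hasDerivAt_fst (F : ℝ → ℝ → ℝ) (hF : ContDiff ℝ (⊤ : ℕ∞) (Function.uncurry F))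
    (ξ η : ℝ) : HasDerivAt (fun a => F a η) (deriv (fun a => F a η) ξ) ξ := by
  have hd : Differentiable ℝ (fun a => F a η) := by
    have : (fun a => F a η) = Function.uncurry F ∘ (fun a => (a, η)) := rfl
    rw [this]
    exact (hF.differentiable (by simp)).comp (differentiable_id.prodMk (differentiable_const _))
  exact (hd ξ).hasDerivAt

/-- Given the `λ = 1` Bäcklund system for `ω, ω⁽¹⁾`, with `ω` a sine-Gordon solution, the
first-order system `f_ξ = cos(ω⁽¹⁾ + ω)`, `f_η = cos(ω⁽¹⁾ − ω)` is compatible: the mixed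
partials agree, `∂_η cos(ω⁽¹⁾ + ω) = ∂_ξ cos(ω⁽¹⁾ − ω)`. -/
theorem stmt_16 (ω ω1 : ℝ → ℝ → ℝ)
    (hω : ContDiff ℝ (⊤ : ℕ∞) (Function.uncurry ω))
    (hω1 : ContDiff ℝ (⊤ : ℕ∞) (Function.uncurry ω1))
    (hBξ : ∀ ξ η : ℝ, deriv (fun a => ω1 a η) ξ
      = deriv (fun a => ω a η) ξ + sin (ω1 ξ η + ω ξ η))
    (hBη : ∀ ξ η : ℝ, deriv (fun b => ω1 ξ b) η
      = -deriv (fun b => ω ξ b) η + sin (ω1 ξ η - ω ξ η))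
    (hSG : ∀ ξ η : ℝ, deriv (fun b => deriv (fun a => ω a b) ξ) η
      = (1 / 2) * sin (2 * ω ξ η)) :
    ∀ ξ η : ℝ, deriv (fun b => cos (ω1 ξ b + ω ξ b)) η
      = deriv (fun a => cos (ω1 a η - ω a η)) ξ := by
  intro ξ η
  have h1 := hasDerivAt_snd ω1 hω1 ξ η
  have h2 := hasDerivAt_snd ω hω ξ η
  have h3 := hasDerivAt_fst ω1 hω1 ξ η
  have h4 := hasDerivAt_fst ω hω ξ η
  have hL : HasDerivAt (fun b => cos (ω1 ξ b + ω ξ b))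
      (-sin (ω1 ξ η + ω ξ η) * (deriv (fun b => ω1 ξ b) η + deriv (fun b => ω ξ b) η)) η :=
    (h1.add h2).cos
  have hR : HasDerivAt (fun a => cos (ω1 a η - ω a η))
      (-sin (ω1 ξ η - ω ξ η) * (deriv (fun a => ω1 a η) ξ - deriv (fun a => ω a η) ξ)) ξ :=
    (h3.sub h4).cos
  rw [hL.deriv, hR.deriv, hBη ξ η, hBξ ξ η]
  ring
end
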